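/- arXiv:2401.09970 — 4 statements merged into one kernel-verified Lean document; each statement's English description precedes it below -/
import Mathlib

section
/- Let b : ℝ → ℝ be continuously differentiable and nonincreasing (b' ≤ 0), and let φ denote the flow of the ODE ż = b(z). Let w : [s,t] → ℝ be a continuous path with w_s = 0 and sup_{r ∈ [s,t]} |w_r| < w̄ for some w̄ > 0. If X : [s,t] → ℝ satisfies X_u = X_s + ∫_s^u b(X_r) dr + w_u for all u ∈ [s,t], then for all u ∈ [s,t]: φ(X_s + w̄, u − s) − 2w̄ ≤ X_u ≤ φ(X_s − w̄, u − s) + 2w̄. -/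
/-!
Put `Y := X - w`, so that `Y u = X s + ∫ r in s..u, b (X r)` solves `Y' = b (Y + w)` with
`|w| < wbar`. If `Y` reached `φ (X s - wbar) (· - s) + wbar`, then at that moment
`X = Y + w > φ (X s - wbar) (· - s)`, and since `b` is nonincreasing the drift `b X` of `Y` is at
most the drift of the flow: `Y` can never cross that barrier. Symmetrically `Y` stays above
`φ (X s + wbar) (· - s) - wbar`, and `|X - Y| < wbar` gives the remaining `wbar`.
-/

open Set intervalIntegral

theorem image_le_of_deriv_right_le_deriv_of_boundary_le {f f' B B' : ℝ → ℝ} {a b : ℝ}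
    (hf : ContinuousOn f (Icc a b)) (hf' : ∀ x ∈ Ico a b, HasDerivWithinAt f (f' x) (Ici x) x)
    (ha : f a ≤ B a) (hB : ContinuousOn B (Icc a b))
    (hB' : ∀ x ∈ Ico a b, HasDerivWithinAt B (B' x) (Ici x) x)
    (bound : ∀ x ∈ Ico a b, B x ≤ f x → f' x ≤ B' x) : ∀ ⦃x⦄, x ∈ Icc a b → f x ≤ B x := by
  intro x hx
  by_contra! hlt
  -- push the barrier up by a slope `ε` small enough that it still lies below `f x` at `x`
  set ε := (f x - B x) / (x - a + 1)
  have hε : 0 < ε := div_pos (by linarith) (by linarith [hx.1])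
  have hεx : B x + ε * (x - a) < f x := by
    have : ε * (x - a + 1) = f x - B x := div_mul_cancel₀ _ (by linarith [hx.1])
    nlinarith
  have hle := image_le_of_deriv_right_lt_deriv_boundary' (B := fun y => B y + ε * (y - a))
    (B' := fun y => B' y + ε) hf hf' (by simpa using ha) (by fun_prop)
    (fun y hy => ((hB' y hy).add (((hasDerivWithinAt_id y _).sub_const a).const_mul ε)).congr_deriv
      (by ring))
    (fun y hy hfy => by
      have : 0 ≤ ε * (y - a) := mul_nonneg hε.le (by linarith [hy.1])
      linarith [bound y hy (by linarith)]) hx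
  linarith

theorem HasDerivWithinAt.Ici_of_Icc {f : ℝ → ℝ} {f' a b x : ℝ}
    (h : HasDerivWithinAt f f' (Icc a b) x) (hx : x ∈ Ico a b) : HasDerivWithinAt f f' (Ici x) x :=
  h.mono_of_mem_nhdsWithin <|
    Filter.mem_of_superset (Icc_mem_nhdsGE hx.2) (Icc_subset_Icc_left hx.1)

theorem ContinuousOn.hasDerivWithinAt_integral {E : Type*} [NormedAddCommGroup E]
    [NormedSpace ℝ E] [CompleteSpace E] {f : ℝ → E} {a b x : ℝ}
    (hf : ContinuousOn f (Icc a b)) (hx : x ∈ Icc a b) :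
    HasDerivWithinAt (fun u => ∫ r in a..u, f r) (f x) (Icc a b) x := by
  have := Fact.mk hx
  exact integral_hasDerivWithinAt_right
    ((hf.mono (Icc_subset_Icc_right hx.2)).intervalIntegrable_of_Icc hx.1)
    (hf.stronglyMeasurableAtFilter_nhdsWithin measurableSet_Icc x) (hf.continuousWithinAt hx)

section AntitoneDrift

variable {b : ℝ → ℝ} {Y X ψ : ℝ → ℝ} {s t δ : ℝ}

theorem le_solution_add_of_antitone_drift (hb : Antitone b) (hY : ContinuousOn Y (Icc s t))
    (hY' : ∀ x ∈ Ico s t, HasDerivWithinAt Y (b (X x)) (Ici x) x)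
    (hψ : ContinuousOn ψ (Icc s t)) (hψ' : ∀ x ∈ Ico s t, HasDerivWithinAt ψ (b (ψ x)) (Ici x) x)
    (hs : Y s ≤ ψ s + δ) (hXY : ∀ x ∈ Ico s t, Y x - δ < X x) :
    ∀ ⦃x⦄, x ∈ Icc s t → Y x ≤ ψ x + δ :=
  image_le_of_deriv_right_le_deriv_of_boundary_le hY hY' hs (hψ.add continuousOn_const)
    (fun x hx => (hψ' x hx).add_const δ)
    (fun x hx hcross => hb (by linarith [hXY x hx]))

theorem solution_le_add_of_antitone_drift (hb : Antitone b) (hY : ContinuousOn Y (Icc s t))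
    (hY' : ∀ x ∈ Ico s t, HasDerivWithinAt Y (b (X x)) (Ici x) x)
    (hψ : ContinuousOn ψ (Icc s t)) (hψ' : ∀ x ∈ Ico s t, HasDerivWithinAt ψ (b (ψ x)) (Ici x) x)
    (hs : ψ s ≤ Y s + δ) (hXY : ∀ x ∈ Ico s t, X x < Y x + δ) :
    ∀ ⦃x⦄, x ∈ Icc s t → ψ x ≤ Y x + δ :=
  image_le_of_deriv_right_le_deriv_of_boundary_le hψ hψ' hs (hY.add continuousOn_const)
    (fun x hx => (hY' x hx).add_const δ)
    (fun x hx hcross => hb (by linarith [hXY x hx]))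

end AntitoneDrift

theorem stmt_8_general (b : ℝ → ℝ) (hb : ContDiff ℝ 1 b) (hb' : ∀ x, deriv b x ≤ 0)
    (φ : ℝ → ℝ → ℝ)
    (hφ0 : ∀ x : ℝ, φ x 0 = x)
    (hφ' : ∀ x h : ℝ, 0 ≤ h → HasDerivAt (φ x) (b (φ x h)) h)
    (s t wbar : ℝ)
    (w X : ℝ → ℝ)
    (hwbd : ∀ r ∈ Set.Icc s t, |w r| < wbar)
    (hX : ContinuousOn X (Set.Icc s t))
    (hXeq : ∀ u ∈ Set.Icc s t, X u = X s + (∫ r in s..u, b (X r)) + w u) :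
    ∀ u ∈ Set.Icc s t,
      φ (X s + wbar) (u - s) - 2 * wbar ≤ X u ∧ X u ≤ φ (X s - wbar) (u - s) + 2 * wbar := by
  intro u hu
  have hanti : Antitone b := antitone_of_deriv_nonpos (hb.differentiable one_ne_zero) hb'
  set Y := fun x => X s + ∫ r in s..x, b (X r)
  have hXY (x) (hx : x ∈ Icc s t) : Y x - wbar < X x ∧ X x < Y x + wbar := by
    have := abs_lt.mp (hwbd x hx)
    have : X x = Y x + w x := hXeq x hx
    constructor <;> linarith
  have hY (x) (hx : x ∈ Icc s t) : HasDerivWithinAt Y (b (X x)) (Icc s t) x :=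
    ((hb.continuous.comp_continuousOn hX).hasDerivWithinAt_integral hx).const_add _
  have hYc : ContinuousOn Y (Icc s t) := fun x hx => (hY x hx).continuousWithinAt
  have hY' (x) (hx : x ∈ Ico s t) := (hY x (Ico_subset_Icc_self hx)).Ici_of_Icc hx
  have hflow (c x) (hx : x ∈ Icc s t) :
      HasDerivAt (fun y => φ c (y - s)) (b (φ c (x - s))) x := by
    simpa using (hφ' c (x - s) (by linarith [hx.1])).comp_sub_const x s
  have hflowc (c) : ContinuousOn (fun y => φ c (y - s)) (Icc s t) :=
    fun x hx => (hflow c x hx).continuousAt.continuousWithinAt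
  have hflow' (c x) (hx : x ∈ Ico s t) :=
    (hflow c x (Ico_subset_Icc_self hx)).hasDerivWithinAt (s := Ici x)
  have hupper := le_solution_add_of_antitone_drift hanti hYc hY' (hflowc _) (hflow' (X s - wbar))
    (by simp [Y, hφ0]) (fun x hx => (hXY x (Ico_subset_Icc_self hx)).1) hu
  have hlower := solution_le_add_of_antitone_drift hanti hYc hY' (hflowc _) (hflow' (X s + wbar))
    (by simp [Y, hφ0]) (fun x hx => (hXY x (Ico_subset_Icc_self hx)).2) hu
  have := hXY u hu
  constructor <;> linarith

/-- Comparison lemma for decreasing drift: φ(X_s + wbar, u−s) − 2wbar ≤ X_u ≤ φ(X_s − wbar, u−s) + 2wbar. -/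
theorem stmt_8 (b : ℝ → ℝ) (hb : ContDiff ℝ 1 b) (hb' : ∀ x, deriv b x ≤ 0)
    (φ : ℝ → ℝ → ℝ)
    (hφ0 : ∀ x : ℝ, φ x 0 = x)
    (hφ' : ∀ x h : ℝ, 0 ≤ h → HasDerivAt (φ x) (b (φ x h)) h)
    (s t wbar : ℝ) (hst : s < t) (hwbar : 0 < wbar)
    (w X : ℝ → ℝ)
    (hw : ContinuousOn w (Set.Icc s t)) (hws : w s = 0)
    (hwbd : ∀ r ∈ Set.Icc s t, |w r| < wbar)
    (hX : ContinuousOn X (Set.Icc s t))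
    (hXeq : ∀ u ∈ Set.Icc s t, X u = X s + (∫ r in s..u, b (X r)) + w u) :
    ∀ u ∈ Set.Icc s t,
      φ (X s + wbar) (u - s) - 2 * wbar ≤ X u ∧ X u ≤ φ (X s - wbar) (u - s) + 2 * wbar :=
  stmt_8_general b hb hb' φ hφ0 hφ' s t wbar w X hwbd hX hXeq
end

section
/- Let b : ℝ → ℝ be continuously differentiable with b' ≥ 0 everywhere, and let φ denote the flow of the ODE ż = b(z). Let w : [s,t] → ℝ be continuous with w_s = 0 and sup_{r∈[s,t]} |w_r| ≤ w̄. If X satisfies X_u = X_s + ∫_s^u b(X_r) dr + w_u for all u ∈ [s,t], then φ(X_s − w̄, u − s) ≤ X_u ≤ φ(X_s + w̄, u − s) for all u ∈ [s,t]. -/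
/-!
Put `Y u = φ(X_s + w̄, u - s)`. Both `X` and `Y` satisfy integral equations driven by `b`, and
`X u - ∫_s^u b(X) = X_s + w_u ≤ X_s + w̄ = Y u - ∫_s^u b(Y)`. Because `b` is nondecreasing and
locally Lipschitz, `b(X) - b(Y) ≤ L (X - Y)⁺`, so `(X - Y)⁺ ≤ L ∫_s^u (X - Y)⁺` and Grönwall forces
`X ≤ Y`. The lower bound is the same comparison with `φ(X_s - w̄, u - s)` in the role of `X`.
-/

open Set intervalIntegral

theorem eqOn_zero_of_le_mul_integral {Z : ℝ → ℝ} {K a b : ℝ} (hZ : ContinuousOn Z (Icc a b))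
    (hZ0 : ∀ x ∈ Icc a b, 0 ≤ Z x) (hle : ∀ x ∈ Icc a b, Z x ≤ K * ∫ r in a..x, Z r) :
    ∀ x ∈ Icc a b, Z x = 0 := by
  have hG' : ∀ x ∈ Icc a b,
      HasDerivWithinAt (fun y => ∫ r in a..y, Z r) (Z x) (Icc a b) x := by
    intro x hx
    have : Fact (x ∈ Icc a b) := ⟨hx⟩
    exact integral_hasDerivWithinAt_right
      ((hZ.mono (uIcc_subset_Icc (left_mem_Icc.2 (hx.1.trans hx.2)) hx)).intervalIntegrable)
      (hZ.stronglyMeasurableAtFilter_nhdsWithin measurableSet_Icc x) (hZ x hx)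
  have hG0 : ∀ x ∈ Icc a b, 0 ≤ ∫ r in a..x, Z r := fun x hx =>
    integral_nonneg hx.1 fun r hr => hZ0 r ⟨hr.1, hr.2.trans hx.2⟩
  have hG : ∀ x ∈ Icc a b, ∫ r in a..x, Z r = 0 :=
    eq_zero_of_abs_deriv_le_mul_abs_self_of_eq_zero_right (K := K)
      (fun x hx => (hG' x hx).continuousWithinAt)
      (fun x hx => (hG' x (Ico_subset_Icc_self hx)).mono_of_mem_nhdsWithin
        (Icc_mem_nhdsGE_of_mem ⟨hx.1, hx.2⟩))
      integral_same
      (fun x hx => by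
        have hx' := Ico_subset_Icc_self hx
        rw [Real.norm_of_nonneg (hZ0 x hx'), Real.norm_of_nonneg (hG0 x hx')]
        exact hle x hx')
  intro x hx
  exact le_antisymm (by simpa only [hG x hx, mul_zero] using hle x hx) (hZ0 x hx)

theorem Monotone.sub_le_mul_max_sub_zero {b : ℝ → ℝ} {L : NNReal} {S : Set ℝ} (hmono : Monotone b)
    (hL : LipschitzOnWith L b S) {x y : ℝ} (hx : x ∈ S) (hy : y ∈ S) :
    b x - b y ≤ L * max (x - y) 0 := by
  rcases le_total x y with hxy | hyx
  · have hbxy : b x ≤ b y := hmono hxy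
    have hrhs : 0 ≤ (L : ℝ) * max (x - y) 0 := mul_nonneg L.2 (le_max_right _ _)
    linarith
  · calc b x - b y ≤ dist (b x) (b y) := le_abs_self _
      _ ≤ L * dist x y := hL.dist_le_mul x hx y hy
      _ = L * max (x - y) 0 := by
        rw [Real.dist_eq, abs_of_nonneg (sub_nonneg.2 hyx), max_eq_left (sub_nonneg.2 hyx)]

theorem le_of_sub_integral_le {b X Y : ℝ → ℝ} {s t : ℝ} (hb : LocallyLipschitz b)
    (hmono : Monotone b) (hX : ContinuousOn X (Icc s t)) (hY : ContinuousOn Y (Icc s t))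
    (hXY : ∀ u ∈ Icc s t, X u - ∫ r in s..u, b (X r) ≤ Y u - ∫ r in s..u, b (Y r)) :
    ∀ u ∈ Icc s t, X u ≤ Y u := by
  obtain ⟨L, hL⟩ := hb.locallyLipschitzOn.exists_lipschitzOnWith_of_compact
    ((isCompact_Icc.image_of_continuousOn hX).union (isCompact_Icc.image_of_continuousOn hY))
  have hintegrable : ∀ {f : ℝ → ℝ}, ContinuousOn f (Icc s t) → ∀ u ∈ Icc s t,
      IntervalIntegrable f MeasureTheory.volume s u := fun hf u hu =>
    (hf.mono (uIcc_subset_Icc (left_mem_Icc.2 (hu.1.trans hu.2)) hu)).intervalIntegrable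
  set Z : ℝ → ℝ := fun r => max (X r - Y r) 0
  have hZ : ContinuousOn Z (Icc s t) := (hX.sub hY).sup continuousOn_const
  have hbX : ContinuousOn (fun r => b (X r)) (Icc s t) := hb.continuous.comp_continuousOn hX
  have hbY : ContinuousOn (fun r => b (Y r)) (Icc s t) := hb.continuous.comp_continuousOn hY
  have hZle : ∀ u ∈ Icc s t, Z u ≤ L * ∫ r in s..u, Z r := by
    intro u hu
    have hdrift : ∫ r in s..u, (b (X r) - b (Y r)) ≤ ∫ r in s..u, (L : ℝ) * Z r :=
      integral_mono_on hu.1 ((hintegrable hbX u hu).sub (hintegrable hbY u hu))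
        (hintegrable (continuousOn_const.mul hZ) u hu) fun r hr =>
          have hr' : r ∈ Icc s t := ⟨hr.1, hr.2.trans hu.2⟩
          hmono.sub_le_mul_max_sub_zero hL (Or.inl (mem_image_of_mem X hr'))
            (Or.inr (mem_image_of_mem Y hr'))
    rw [integral_sub (hintegrable hbX u hu) (hintegrable hbY u hu), integral_const_mul] at hdrift
    have hZint : 0 ≤ (L : ℝ) * ∫ r in s..u, Z r :=
      mul_nonneg L.2 (integral_nonneg hu.1 fun _ _ => le_max_right _ _)
    exact max_le (by linarith [hXY u hu]) hZint
  intro u hu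
  have hZu := eqOn_zero_of_le_mul_integral hZ (fun _ _ => le_max_right _ _) hZle u hu
  simpa [Z, sub_nonpos] using hZu

theorem sub_integral_comp_sub_eq {b f : ℝ → ℝ} {s u : ℝ} (hb : Continuous b)
    (hf : ∀ h, 0 ≤ h → HasDerivAt f (b (f h)) h) (hsu : s ≤ u) :
    f (u - s) - ∫ r in s..u, b (f (r - s)) = f 0 := by
  have hu : 0 ≤ u - s := sub_nonneg.2 hsu
  have hderiv : ∀ r ∈ uIcc 0 (u - s), HasDerivAt f (b (f r)) r := fun r hr =>
    hf r (by rw [uIcc_of_le hu] at hr; exact hr.1)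
  have hcont : ContinuousOn (fun r => b (f r)) (uIcc 0 (u - s)) := fun r hr =>
    (hb.continuousAt.comp (hderiv r hr).continuousAt).continuousWithinAt
  rw [integral_comp_sub_right (fun r => b (f r)), sub_self,
    integral_eq_sub_of_hasDerivAt hderiv hcont.intervalIntegrable]
  ring

theorem stmt_9_general (b : ℝ → ℝ) (hb : ContDiff ℝ 1 b) (hb' : ∀ x, 0 ≤ deriv b x)
    (φ : ℝ → ℝ → ℝ)
    (hφ0 : ∀ x : ℝ, φ x 0 = x)
    (hφ' : ∀ x h : ℝ, 0 ≤ h → HasDerivAt (φ x) (b (φ x h)) h)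
    (s t wbar : ℝ)
    (w X : ℝ → ℝ)
    (hwbd : ∀ r ∈ Set.Icc s t, |w r| ≤ wbar)
    (hX : ContinuousOn X (Set.Icc s t))
    (hXeq : ∀ u ∈ Set.Icc s t, X u = X s + (∫ r in s..u, b (X r)) + w u) :
    ∀ u ∈ Set.Icc s t,
      φ (X s - wbar) (u - s) ≤ X u ∧ X u ≤ φ (X s + wbar) (u - s) := by
  have hmono : Monotone b := monotone_of_deriv_nonneg (hb.differentiable one_ne_zero) hb'
  have hflow_cont (c : ℝ) : ContinuousOn (fun r => φ c (r - s)) (Icc s t) := fun r hr =>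
    ((hφ' c _ (sub_nonneg.2 hr.1)).continuousAt.comp (f := fun r => r - s)
      (continuous_sub_right s).continuousAt).continuousWithinAt
  have hflow (c : ℝ) (r : ℝ) (hr : r ∈ Icc s t) :
      φ c (r - s) - ∫ q in s..r, b (φ c (q - s)) = c := by
    rw [sub_integral_comp_sub_eq hb.continuous (hφ' c) hr.1, hφ0]
  have hXflow (r : ℝ) (hr : r ∈ Icc s t) : X r - ∫ q in s..r, b (X q) = X s + w r := by
    linarith [hXeq r hr]
  intro u hu
  constructor
  · refine le_of_sub_integral_le hb.locallyLipschitz hmono (hflow_cont _) hX (fun r hr => ?_) u hu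
    rw [hflow _ r hr, hXflow r hr]
    linarith [(abs_le.1 (hwbd r hr)).1]
  · refine le_of_sub_integral_le hb.locallyLipschitz hmono hX (hflow_cont _) (fun r hr => ?_) u hu
    rw [hflow _ r hr, hXflow r hr]
    linarith [(abs_le.1 (hwbd r hr)).2]

/-- Comparison lemma for nondecreasing drift: φ(X_s − wbar, u−s) ≤ X_u ≤ φ(X_s + wbar, u−s). -/
theorem stmt_9 (b : ℝ → ℝ) (hb : ContDiff ℝ 1 b) (hb' : ∀ x, 0 ≤ deriv b x)
    (φ : ℝ → ℝ → ℝ)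
    (hφ0 : ∀ x : ℝ, φ x 0 = x)
    (hφ' : ∀ x h : ℝ, 0 ≤ h → HasDerivAt (φ x) (b (φ x h)) h)
    (s t wbar : ℝ) (hst : s < t) (hwbar : 0 < wbar)
    (w X : ℝ → ℝ)
    (hw : ContinuousOn w (Set.Icc s t)) (hws : w s = 0)
    (hwbd : ∀ r ∈ Set.Icc s t, |w r| ≤ wbar)
    (hX : ContinuousOn X (Set.Icc s t))
    (hXeq : ∀ u ∈ Set.Icc s t, X u = X s + (∫ r in s..u, b (X r)) + w u) :
    ∀ u ∈ Set.Icc s t,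
      φ (X s - wbar) (u - s) ≤ X u ∧ X u ≤ φ (X s + wbar) (u - s) :=
  stmt_9_general b hb hb' φ hφ0 hφ' s t wbar w X hwbd hX hXeq
end

section
/- Let 0 < γ < 1, A > 0. Suppose X : [0,T] → ℝ is continuous, X_t ≥ 0 for all t, and satisfies X_t = ∫_0^t A X_r^γ dr + w_t for a continuous path w with w_0 = 0. Let τ = sup{ s ≤ t : X_s = 0 } for a given t ∈ [0,T] (with τ = 0 if X never vanishes and X_0 = 0). Then X_t ≤ φ(2 sup_{r ≤ T} |w_r|, A t), where φ(x,h) = (x^{1−γ} + (1−γ)h)^{1/(1−γ)}. -/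
/-!
Along `t ↦ X t - ∫₀ᵗ A X^γ` the path `X` only sees the noise `w`, which is bounded by
`M = sup |w|`; the flow `Z` of `ż = A z^γ` started at `M + ε` has `Z t - ∫₀ᵗ A Z^γ = M + ε`.
Since the drift is nondecreasing on `[0, ∞)`, at the first time `X` would catch up with `Z`
the integrals are ordered and the two identities contradict each other, so `X ≤ Z`.
Letting `ε → 0` and using monotonicity of the flow in its initial value gives the bound.
-/

open Set Filter Topology

/-- The flow `φ(x, h)` of `ż = z^γ`, started at `x` and run for time `h`. -/
noncomputable def powFlow (γ x h : ℝ) : ℝ :=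
  (x ^ (1 - γ) + (1 - γ) * h) ^ (1 / (1 - γ))

section powFlow

variable {γ : ℝ}

theorem powFlow_nonneg (hγ : γ ≤ 1) {x h : ℝ} (hx : 0 ≤ x) (hh : 0 ≤ h) :
    0 ≤ powFlow γ x h := by
  have h1 : 0 ≤ 1 - γ := sub_nonneg.2 hγ
  exact Real.rpow_nonneg (by have := Real.rpow_nonneg hx (1 - γ); positivity) _

theorem powFlow_zero_right (hγ : γ < 1) {x : ℝ} (hx : 0 ≤ x) : powFlow γ x 0 = x := by
  have : (1 - γ) * (1 / (1 - γ)) = 1 := by field_simp [(sub_pos.2 hγ).ne']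
  rw [powFlow, mul_zero, add_zero, ← Real.rpow_mul hx, this, Real.rpow_one]

theorem continuous_powFlow (hγ : γ ≤ 1) : Continuous (Function.uncurry (powFlow γ)) := by
  have h1 : 0 ≤ 1 - γ := sub_nonneg.2 hγ
  exact (Real.continuous_rpow_const (by positivity)).comp
    (((Real.continuous_rpow_const h1).comp continuous_fst).add (continuous_const.mul continuous_snd))

theorem Continuous.powFlow {α : Type*} [TopologicalSpace α] {f g : α → ℝ} (hγ : γ ≤ 1)
    (hf : Continuous f) (hg : Continuous g) : Continuous fun a => powFlow γ (f a) (g a) :=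
  (continuous_powFlow hγ).comp (hf.prodMk hg)

theorem powFlow_mono_left (hγ : γ < 1) {h : ℝ} (hh : 0 ≤ h) :
    MonotoneOn (fun x => powFlow γ x h) (Ici 0) := by
  intro x hx y _ hxy
  have h1 : 0 < 1 - γ := sub_pos.2 hγ
  have hbase : 0 ≤ x ^ (1 - γ) + (1 - γ) * h := by
    have := Real.rpow_nonneg (mem_Ici.1 hx) (1 - γ); positivity
  exact Real.rpow_le_rpow hbase
    (add_le_add_left (Real.rpow_le_rpow (mem_Ici.1 hx) hxy h1.le) _) (by positivity)

theorem hasDerivAt_powFlow (hγ : γ < 1) {x h : ℝ} (hx : 0 < x) (hh : 0 ≤ h) :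
    HasDerivAt (powFlow γ x) (powFlow γ x h ^ γ) h := by
  have h1 : 0 < 1 - γ := sub_pos.2 hγ
  have hbase : 0 < x ^ (1 - γ) + (1 - γ) * h := by
    have := Real.rpow_pos_of_pos hx (1 - γ); positivity
  have hlin : HasDerivAt (fun h => x ^ (1 - γ) + (1 - γ) * h) (1 - γ) h := by
    simpa using ((hasDerivAt_id h).const_mul (1 - γ)).const_add (x ^ (1 - γ))
  refine ((Real.hasDerivAt_rpow_const (Or.inl hbase.ne')).comp h hlin).congr_deriv ?_
  have hexp : 1 / (1 - γ) - 1 = 1 / (1 - γ) * γ := by field_simp; ring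
  rw [powFlow, ← Real.rpow_mul hbase.le, ← hexp]
  field_simp

theorem powFlow_eq_add_integral (hγ0 : 0 ≤ γ) (hγ : γ < 1) {A x t : ℝ} (hA : 0 ≤ A)
    (hx : 0 < x) (ht : 0 ≤ t) :
    powFlow γ x (A * t) = x + ∫ r in (0:ℝ)..t, A * powFlow γ x (A * r) ^ γ := by
  have hderiv : ∀ r ∈ uIcc 0 t,
      HasDerivAt (fun r => powFlow γ x (A * r)) (A * powFlow γ x (A * r) ^ γ) r := by
    intro r hr
    rw [uIcc_of_le ht] at hr
    have := (hasDerivAt_powFlow hγ hx (mul_nonneg hA hr.1)).comp r ((hasDerivAt_id r).const_mul A)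
    simpa [mul_comm, Function.comp_def] using this
  have hcont : Continuous fun r => A * powFlow γ x (A * r) ^ γ :=
    continuous_const.mul <| (Real.continuous_rpow_const hγ0).comp <|
      continuous_const.powFlow hγ.le (continuous_const.mul continuous_id)
  rw [intervalIntegral.integral_eq_sub_of_hasDerivAt hderiv (hcont.intervalIntegrable 0 t),
    mul_zero, powFlow_zero_right hγ hx.le]
  ring

end powFlow

/-- The strict inequality cannot be relaxed: the drift need not be Lipschitz, so the integral
equation may have several solutions with the same initial value. -/
theorem le_of_sub_integral_lt_sub_integral {g X Z : ℝ → ℝ} {s : Set ℝ} {a b : ℝ}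
    (hg : MonotoneOn g s) (hgc : ContinuousOn g s)
    (hX : ContinuousOn X (Icc a b)) (hZ : ContinuousOn Z (Icc a b))
    (hXs : MapsTo X (Icc a b) s) (hZs : MapsTo Z (Icc a b) s)
    (hlt : ∀ t ∈ Icc a b, X t - ∫ r in a..t, g (X r) < Z t - ∫ r in a..t, g (Z r)) :
    ∀ t ∈ Icc a b, X t ≤ Z t := by
  by_contra! ⟨t, ht, hZX⟩
  set S := Icc a b ∩ (fun r => X r - Z r) ⁻¹' Ici 0
  have hSne : S.Nonempty := ⟨t, ht, sub_nonneg.2 hZX.le⟩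
  have hSbdd : BddBelow S := ⟨a, fun r hr => hr.1.1⟩
  have hSclosed : IsClosed S :=
    (hX.sub hZ).preimage_isClosed_of_isClosed isClosed_Icc isClosed_Ici
  obtain ⟨hτ, hXZτ : 0 ≤ X _ - Z _⟩ := hSclosed.csInf_mem hSne hSbdd
  set τ := sInf S
  have hsub : Icc a τ ⊆ Icc a b := Icc_subset_Icc_right hτ.2
  have hbefore : ∀ r ∈ Ioo a τ, X r < Z r := fun r hr => by
    by_contra! hle
    exact (csInf_le hSbdd ⟨hsub (Ioo_subset_Icc_self hr), sub_nonneg.2 hle⟩).not_gt hr.2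
  have hint : ∀ {Y : ℝ → ℝ}, ContinuousOn Y (Icc a b) → MapsTo Y (Icc a b) s →
      IntervalIntegrable (fun r => g (Y r)) MeasureTheory.volume a τ := fun hY hYs =>
    ContinuousOn.intervalIntegrable_of_Icc hτ.1 ((hgc.comp hY hYs).mono hsub)
  have hmono : ∫ r in a..τ, g (X r) ≤ ∫ r in a..τ, g (Z r) :=
    intervalIntegral.integral_mono_on_of_le_Ioo hτ.1 (hint hX hXs) (hint hZ hZs) fun r hr =>
      hg (hXs (hsub (Ioo_subset_Icc_self hr))) (hZs (hsub (Ioo_subset_Icc_self hr)))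
        (hbefore r hr).le
  linarith [hlt τ hτ]

theorem stmt_18_general (γ A T : ℝ) (hγ0 : 0 < γ) (hγ1 : γ < 1) (hA : 0 < A)
    (X w : ℝ → ℝ)
    (hX : ContinuousOn X (Set.Icc 0 T))
    (hXpos : ∀ t ∈ Set.Icc (0:ℝ) T, 0 ≤ X t)
    (hw : ContinuousOn w (Set.Icc 0 T))
    (hXeq : ∀ t ∈ Set.Icc (0:ℝ) T, X t = (∫ r in (0:ℝ)..t, A * (X r) ^ γ) + w t) :
    ∀ t ∈ Set.Icc (0:ℝ) T,
      X t ≤ ((2 * sSup ((fun r => |w r|) '' Set.Icc (0:ℝ) T)) ^ (1 - γ)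
              + (1 - γ) * (A * t)) ^ (1 / (1 - γ)) := by
  intro t ht
  set M := sSup ((fun r => |w r|) '' Icc (0:ℝ) T)
  have hwM : ∀ r ∈ Icc (0:ℝ) T, |w r| ≤ M := fun r hr =>
    le_csSup (isCompact_Icc.image_of_continuousOn hw.abs).bddAbove ⟨r, hr, rfl⟩
  have hM : 0 ≤ M := (abs_nonneg _).trans (hwM t ht)
  have hdrift : MonotoneOn (fun x : ℝ => A * x ^ γ) (Ici 0) := fun x hx y _ hxy =>
    mul_le_mul_of_nonneg_left (Real.rpow_le_rpow hx hxy hγ0.le) hA.le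
  have hflow : ∀ e > 0, X t ≤ powFlow γ (M + e) (A * t) := by
    intro e he
    refine le_of_sub_integral_lt_sub_integral (Z := fun s => powFlow γ (M + e) (A * s)) hdrift
      (continuous_const.mul (Real.continuous_rpow_const hγ0.le)).continuousOn hX
      (continuous_const.powFlow hγ1.le (continuous_const.mul continuous_id)).continuousOn
      hXpos (fun s hs => powFlow_nonneg hγ1.le (by positivity) (mul_nonneg hA.le hs.1))
      (fun s hs => ?_) t ht
    rw [powFlow_eq_add_integral hγ0.le hγ1 hA.le (by positivity) hs.1, hXeq s hs]
    linarith [(le_abs_self (w s)).trans (hwM s hs)]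
  have hlim : Tendsto (fun e => powFlow γ (M + e) (A * t)) (𝓝[>] 0)
      (𝓝 (powFlow γ M (A * t))) := by
    have hcont : Continuous fun e => powFlow γ (M + e) (A * t) :=
      (continuous_const.add continuous_id).powFlow hγ1.le continuous_const
    exact (hcont.tendsto' 0 _ (by simp)).mono_left nhdsWithin_le_nhds
  calc X t ≤ powFlow γ M (A * t) := ge_of_tendsto hlim (eventually_nhdsWithin_of_forall hflow)
    _ ≤ powFlow γ (2 * M) (A * t) :=
      powFlow_mono_left hγ1 (mul_nonneg hA.le ht.1) hM (by positivity : (0:ℝ) ≤ 2 * M)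
        (by linarith)

/-- Upper bound: a nonnegative solution of X_t = ∫_0^t A X_r^γ dr + w_t satisfies
X_t ≤ φ(2 sup_{r≤T} |w_r|, A t), where φ(x,h) = (x^{1−γ} + (1−γ)h)^{1/(1−γ)}. -/
theorem stmt_18 (γ A T : ℝ) (hγ0 : 0 < γ) (hγ1 : γ < 1) (hA : 0 < A) (hT : 0 < T)
    (X w : ℝ → ℝ)
    (hX : ContinuousOn X (Set.Icc 0 T))
    (hXpos : ∀ t ∈ Set.Icc (0:ℝ) T, 0 ≤ X t)
    (hw : ContinuousOn w (Set.Icc 0 T)) (hw0 : w 0 = 0)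
    (hXeq : ∀ t ∈ Set.Icc (0:ℝ) T, X t = (∫ r in (0:ℝ)..t, A * (X r) ^ γ) + w t) :
    ∀ t ∈ Set.Icc (0:ℝ) T,
      X t ≤ ((2 * sSup ((fun r => |w r|) '' Set.Icc (0:ℝ) T)) ^ (1 - γ)
              + (1 - γ) * (A * t)) ^ (1 / (1 - γ)) :=
  stmt_18_general γ A T hγ0 hγ1 hA X w hX hXpos hw hXeq
end

section
/- Let H ∈ (0,1), δ ∈ (0, min(H, 1/2)), Z ≥ 12 t_e^{−1/2−δ} for some t_e ∈ (0,1), and define h(t) = Z(t^{H+1/2} − t_e^{H+1/2}) − 2(t − t_e)^{H−δ} for t ≥ t_e. Then h'(t) > 0 for all t > 2 t_e; consequently inf_{t ∈ [t_e, 1]} h(t) ≥ −2 t_e^{H−δ}. -/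
set_option maxHeartbeats 1600000 in
/-- For h(t) = Z(t^{H+1/2} − t_e^{H+1/2}) − 2(t−t_e)^{H−δ} with Z ≥ 12 t_e^{−1/2−δ}:
h' > 0 on (2t_e, ∞), and inf over [t_e,1] of h is at least −2 t_e^{H−δ}. -/
theorem stmt_19 (H δ t_e Z : ℝ) (hH0 : 0 < H) (hH1 : H < 1)
    (hδ0 : 0 < δ) (hδ : δ < min H (1/2))
    (hte0 : 0 < t_e) (hte1 : t_e < 1)
    (hZ : 12 * t_e ^ (-(1/2) - δ) ≤ Z)
    (h : ℝ → ℝ)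
    (hh : ∀ t : ℝ, t_e ≤ t →
      h t = Z * (t ^ (H + 1/2) - t_e ^ (H + 1/2)) - 2 * (t - t_e) ^ (H - δ)) :
    (∀ t : ℝ, 2 * t_e < t → 0 < deriv h t) ∧
    (∀ t ∈ Set.Icc t_e 1, -(2 * t_e ^ (H - δ)) ≤ h t) := by
  have hδH : δ < H := lt_of_lt_of_le hδ (min_le_left _ _)
  have hδ2 : δ < 1/2 := lt_of_lt_of_le hδ (min_le_right _ _)
  have hZ0 : 0 < Z := lt_of_lt_of_le (by positivity) hZ
  -- sqrt2 bounds
  have hsq : (4/3 : ℝ) ≤ (2:ℝ) ^ ((1:ℝ)/2) := by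
    rw [← Real.sqrt_eq_rpow]
    nlinarith [Real.sq_sqrt (by norm_num : (0:ℝ) ≤ 2), Real.sqrt_nonneg 2]
  have hsq2 : (2:ℝ) ^ ((3:ℝ)/2) ≤ 3 := by
    have h1 : (2:ℝ) ^ ((3:ℝ)/2) = 2 * 2 ^ ((1:ℝ)/2) := by
      rw [show (3:ℝ)/2 = 1 + 1/2 by norm_num, Real.rpow_add (by norm_num), Real.rpow_one]
    have h2 : (2:ℝ) ^ ((1:ℝ)/2) ≤ 3/2 := by
      rw [← Real.sqrt_eq_rpow]
      nlinarith [Real.sq_sqrt (by norm_num : (0:ℝ) ≤ 2), Real.sqrt_nonneg 2]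
    rw [h1]; linarith
  constructor
  · intro t ht
    have ht0 : 0 < t := by linarith
    have htet : t_e < t := by linarith
    have htmt0 : 0 < t - t_e := by linarith
    have hhalf : t/2 < t - t_e := by linarith
    -- h equals the formula in a neighborhood of t
    set f : ℝ → ℝ := fun x => Z * (x ^ (H + 1/2) - t_e ^ (H + 1/2)) - 2 * (x - t_e) ^ (H - δ) with hf
    have hev : f =ᶠ[nhds t] h := by
      filter_upwards [Ioi_mem_nhds htet] with x hx
      exact (hh x (le_of_lt hx)).symm
    have hd1 : HasDerivAt (fun x : ℝ => x ^ (H + 1/2)) ((H + 1/2) * t ^ (H + 1/2 - 1)) t :=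
      Real.hasDerivAt_rpow_const (Or.inl (ne_of_gt ht0))
    have hd2 : HasDerivAt (fun x : ℝ => (x - t_e) ^ (H - δ))
        ((H - δ) * (t - t_e) ^ (H - δ - 1) * 1) t := by
      exact (Real.hasDerivAt_rpow_const (Or.inl (ne_of_gt htmt0))).comp t
        ((hasDerivAt_id t).sub_const t_e)
    have hdf : HasDerivAt f
        (Z * ((H + 1/2) * t ^ (H + 1/2 - 1)) - 2 * ((H - δ) * (t - t_e) ^ (H - δ - 1) * 1)) t :=
      ((hd1.sub_const _).const_mul Z).sub (hd2.const_mul 2)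
    have hdh := hdf.congr_of_eventuallyEq hev.symm
    rw [hdh.deriv]
    -- positivity of the derivative
    have key1 : 2 * ((H - δ) * (t - t_e) ^ (H - δ - 1) * 1) < 6 * t ^ (H - δ - 1) := by
      have e1 : (t - t_e) ^ (H - δ - 1) ≤ (t/2) ^ (H - δ - 1) :=
        Real.rpow_le_rpow_of_nonpos (by linarith) hhalf.le (by linarith)
      have e2 : (t/2) ^ (H - δ - 1) = t ^ (H - δ - 1) * 2 ^ (1 - (H - δ)) := by
        rw [Real.div_rpow ht0.le (by norm_num), div_eq_mul_inv, ← Real.rpow_neg (by norm_num)]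
        ring_nf
      have e3 : (2:ℝ) ^ (1 - (H - δ)) ≤ 3 := by
        calc (2:ℝ) ^ (1 - (H - δ)) ≤ 2 ^ ((3:ℝ)/2) :=
              Real.rpow_le_rpow_of_exponent_le one_le_two (by linarith)
          _ ≤ 3 := hsq2
      have tp : 0 < t ^ (H - δ - 1) := Real.rpow_pos_of_pos ht0 _
      have e4 : (t - t_e) ^ (H - δ - 1) ≤ 3 * t ^ (H - δ - 1) := by
        calc (t - t_e) ^ (H - δ - 1) ≤ t ^ (H - δ - 1) * 2 ^ (1 - (H - δ)) := by
              rw [← e2]; exact e1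
          _ ≤ 3 * t ^ (H - δ - 1) := by nlinarith
      have tpm : 0 < (t - t_e) ^ (H - δ - 1) := Real.rpow_pos_of_pos htmt0 _
      nlinarith
    have key2 : 6 * t ^ (H - δ - 1) ≤ Z * ((H + 1/2) * t ^ (H + 1/2 - 1)) := by
      have e1 : t ^ (-(1/2) - δ) ≤ t_e ^ (-(1/2) - δ) :=
        Real.rpow_le_rpow_of_nonpos hte0 htet.le (by linarith)
      have e2 : t ^ (H - δ - 1) = t ^ (-(1/2) - δ) * t ^ (H + 1/2 - 1) := by
        rw [← Real.rpow_add ht0]; ring_nf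
      have tp : 0 < t ^ (H + 1/2 - 1) := Real.rpow_pos_of_pos ht0 _
      have e3 : 6 * t ^ (H - δ - 1) ≤ 6 * t_e ^ (-(1/2) - δ) * t ^ (H + 1/2 - 1) := by
        rw [e2, ← mul_assoc]; gcongr
      have hZp : 12 * t_e ^ (-(1/2) - δ) * (1/2) ≤ Z * (H + 1/2) :=
        mul_le_mul hZ (by linarith) (by norm_num) hZ0.le
      have e4 : 6 * t_e ^ (-(1/2) - δ) * t ^ (H + 1/2 - 1)
          ≤ Z * ((H + 1/2) * t ^ (H + 1/2 - 1)) := by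
        calc 6 * t_e ^ (-(1/2) - δ) * t ^ (H + 1/2 - 1)
            = 12 * t_e ^ (-(1/2) - δ) * (1/2) * t ^ (H + 1/2 - 1) := by ring
          _ ≤ Z * (H + 1/2) * t ^ (H + 1/2 - 1) :=
              mul_le_mul_of_nonneg_right hZp tp.le
          _ = Z * ((H + 1/2) * t ^ (H + 1/2 - 1)) := by ring
      linarith
    linarith
  · rintro t ⟨ht1, ht2⟩
    rw [hh t ht1]
    have htep : 0 < t_e ^ (H - δ) := Real.rpow_pos_of_pos hte0 _
    rcases le_or_gt t (2 * t_e) with hc | hc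
    · have e1 : t_e ^ (H + 1/2) ≤ t ^ (H + 1/2) :=
        Real.rpow_le_rpow hte0.le ht1 (by linarith)
      have e2 : (t - t_e) ^ (H - δ) ≤ t_e ^ (H - δ) :=
        Real.rpow_le_rpow (by linarith) (by linarith) (by linarith)
      nlinarith
    · -- t ≥ 2 t_e : show h t ≥ 0
      have ht0 : 0 < t := by linarith
      have e1 : (t - t_e) ^ (H - δ) ≤ t ^ (H - δ) :=
        Real.rpow_le_rpow (by linarith) (by linarith) (by linarith)
      have e2 : t_e ^ (H + 1/2) ≤ (t/2) ^ (H + 1/2) :=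
        Real.rpow_le_rpow hte0.le (by linarith) (by linarith)
      have e3 : (t/2) ^ (H + 1/2) ≤ t ^ (H + 1/2) * (3/4) := by
        rw [Real.div_rpow ht0.le (by norm_num)]
        have h2p : (4/3 : ℝ) ≤ (2:ℝ) ^ (H + 1/2) := by
          calc (4/3 : ℝ) ≤ (2:ℝ) ^ ((1:ℝ)/2) := hsq
            _ ≤ (2:ℝ) ^ (H + 1/2) :=
              Real.rpow_le_rpow_of_exponent_le one_le_two (by linarith)
        have tp : 0 < t ^ (H + 1/2) := Real.rpow_pos_of_pos ht0 _
        rw [div_le_iff₀ (by linarith)]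
        nlinarith
      have e4 : t ^ (H + 1/2) * (1/4) ≤ t ^ (H + 1/2) - t_e ^ (H + 1/2) := by linarith
      have e5 : 3 * t_e ^ (-(1/2) - δ) * t ^ (H + 1/2) ≤ Z * (t ^ (H + 1/2) - t_e ^ (H + 1/2)) := by
        calc 3 * t_e ^ (-(1/2) - δ) * t ^ (H + 1/2)
            = 12 * t_e ^ (-(1/2) - δ) * (t ^ (H + 1/2) * (1/4)) := by ring
          _ ≤ Z * (t ^ (H + 1/2) - t_e ^ (H + 1/2)) := by
              apply mul_le_mul hZ e4 (by positivity) hZ0.le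
      have e6 : 2 * t ^ (H - δ) ≤ 3 * t_e ^ (-(1/2) - δ) * t ^ (H + 1/2) := by
        have e7 : t ^ (-(1/2) - δ) ≤ t_e ^ (-(1/2) - δ) :=
          Real.rpow_le_rpow_of_nonpos hte0 (by linarith) (by linarith)
        have e8 : t ^ (H - δ) = t ^ (-(1/2) - δ) * t ^ (H + 1/2) := by
          rw [← Real.rpow_add ht0]; ring_nf
        have tp : 0 < t ^ (H + 1/2) := Real.rpow_pos_of_pos ht0 _
        rw [e8]
        nlinarith [mul_le_mul_of_nonneg_right e7 tp.le,
          mul_pos (Real.rpow_pos_of_pos hte0 (-(1/2) - δ)) tp]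
      have tq : 0 < t ^ (H - δ) := Real.rpow_pos_of_pos ht0 _
      nlinarith
end
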